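/- arXiv:1907.01942 — 2 statements merged into one kernel-verified Lean document; each statement's English description precedes it below -/
import Mathlib

section
/- Let θ ∈ ℝ^d be a unit vector and let g : ℝ → ℝ satisfy |g(y) − g(y′)| ≤ C|y − y′|^α for all y, y′ ∈ ℝ with constant C < ∞ and exponent α ∈ (0,1). Let f(x) = g(θᵀx) and suppose σ² = Var(f(X)) > 0 for X ~ N(0, I_d). Then the mean dimension of f satisfies ν(f) ≤ (C/σ)² · 2^{α−1} · M_{2α} · d^{1−α}. -/
/-!
Resampling the `j`-th coordinate moves `θᵀx` by `θ_j (x_j - z_j)`, so the Hölder bound on `g` gives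
`τ̄²_j(f) ≤ ½ C² |θ_j|^{2α} E|X_j - Z_j|^{2α}`. Since `X_j - Z_j ~ N(0, 2)`, the expectation is
`2^α M_{2α}`. Finally `∑_j |θ_j|^{2α} = ∑_j (θ_j²)^α ≤ d^{1-α} (∑_j θ_j²)^α = d^{1-α}` by Hölder's
inequality, and dividing by `σ²` gives the bound.
-/

open MeasureTheory ProbabilityTheory Real Filter
open scoped NNReal

noncomputable section

/-- Standard Gaussian measure `N(0, I_d)` on `ℝ^d`. -/
def stdGaussian (d : ℕ) : Measure (Fin d → ℝ) :=
  Measure.pi fun _ => gaussianReal 0 1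

/-- Sobol' total index `τ̄²_j(f) = (1/2)·E[(f(X) − f(X_{−j}:Z_j))²]`. -/
def sobolTau (d : ℕ) (f : (Fin d → ℝ) → ℝ) (j : Fin d) : ℝ :=
  (1 / 2) * ∫ p : (Fin d → ℝ) × (Fin d → ℝ),
    (f p.1 - f (Function.update p.1 j (p.2 j))) ^ 2
      ∂((stdGaussian d).prod (stdGaussian d))

/-- Mean dimension `ν(f) = (Σ_j τ̄²_j(f)) / Var(f(X))`. -/
def meanDim (d : ℕ) (f : (Fin d → ℝ) → ℝ) : ℝ :=
  (∑ j, sobolTau d f j) / variance f (stdGaussian d)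

/-- Gaussian fractional absolute moment `M_η = 2^{η/2} Γ((η+1)/2) / √π`. -/
def Mmom (η : ℝ) : ℝ := 2 ^ (η / 2) / Real.sqrt π * Real.Gamma ((η + 1) / 2)

/-- Standard normal CDF `Φ`. -/
def Phi (t : ℝ) : ℝ := ((gaussianReal 0 1) (Set.Iic t)).toReal

/-- Standard normal density `φ`. -/
def gpdf (x : ℝ) : ℝ := Real.exp (-x ^ 2 / 2) / Real.sqrt (2 * π)

instance (d : ℕ) : IsProbabilityMeasure (stdGaussian d) :=
  inferInstanceAs (IsProbabilityMeasure (Measure.pi _))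

lemma integral_abs_rpow_gaussianReal_zero_one {η : ℝ} (hη : -1 < η) :
    ∫ y, |y| ^ η ∂(gaussianReal 0 1) = Mmom η := by
  set F : ℝ → ℝ := fun t => t ^ η * rexp (-(1 / 2) * t ^ (2 : ℝ))
  have hIoi : ∫ y in Set.Ioi (0 : ℝ), F y
      = (1 / 2 : ℝ) ^ (-(η + 1) / 2) * (1 / 2) * Gamma ((η + 1) / 2) :=
    integral_rpow_mul_exp_neg_mul_rpow two_pos hη (by norm_num)
  have hhalf : (1 / 2 : ℝ) ^ (-(η + 1) / 2) = 2 ^ (η / 2) * √2 := by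
    rw [one_div, Real.inv_rpow zero_le_two, ← Real.rpow_neg zero_le_two,
      show -(-(η + 1) / 2) = η / 2 + 1 / 2 by ring, Real.rpow_add two_pos, Real.sqrt_eq_rpow]
  calc ∫ y, |y| ^ η ∂(gaussianReal 0 1)
      = (√(2 * π))⁻¹ * ∫ y, F |y| := by
        rw [integral_gaussianReal_eq_integral_smul one_ne_zero, ← integral_const_mul]
        congr 1 with y
        simp only [F, gaussianPDFReal, smul_eq_mul, NNReal.coe_one, mul_one, sub_zero,
          Real.rpow_two, sq_abs]
        ring_nf
    _ = Mmom η := by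
        rw [integral_comp_abs (f := F), hIoi, hhalf, Mmom, Real.sqrt_mul zero_le_two]
        field_simp

lemma Mmom_nonneg {η : ℝ} (hη : -1 < η) : 0 ≤ Mmom η :=
  integral_abs_rpow_gaussianReal_zero_one hη ▸ integral_nonneg fun _ => by positivity

lemma integral_abs_rpow_gaussianReal_zero_mean {η : ℝ} (hη : -1 < η) (v : ℝ≥0) :
    ∫ w, |w| ^ η ∂(gaussianReal 0 v) = (v : ℝ) ^ (η / 2) * Mmom η := by
  have hscale : (gaussianReal 0 1).map (√(v : ℝ) * ·) = gaussianReal 0 v := by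
    rw [gaussianReal_map_const_mul, mul_zero, mul_one]
    congr 1
    exact NNReal.eq (by simp)
  rw [← hscale, integral_map (by fun_prop)
    (measurable_abs.pow_const η).aestronglyMeasurable]
  simp_rw [abs_mul, Real.mul_rpow (abs_nonneg _) (abs_nonneg _), integral_const_mul,
    integral_abs_rpow_gaussianReal_zero_one hη, abs_of_nonneg (Real.sqrt_nonneg _),
    Real.sqrt_eq_rpow, ← Real.rpow_mul v.coe_nonneg]
  ring_nf

lemma integrable_abs_rpow_gaussianReal {η : ℝ} (hη : 0 < η) (μ : ℝ) (v : ℝ≥0) :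
    Integrable (fun w => |w| ^ η) (gaussianReal μ v) := by
  simpa [ENNReal.toReal_ofReal hη.le] using
    (memLp_id_gaussianReal' (μ := μ) (v := v) (ENNReal.ofReal η)
      ENNReal.ofReal_ne_top).integrable_norm_rpow'

lemma map_sub_prod_gaussianReal (m₁ m₂ : ℝ) (v₁ v₂ : ℝ≥0) :
    ((gaussianReal m₁ v₁).prod (gaussianReal m₂ v₂)).map (fun p => p.1 - p.2)
      = gaussianReal (m₁ - m₂) (v₁ + v₂) := by
  have hsub : (fun p : ℝ × ℝ => p.1 - p.2) = (fun p => p.1 + p.2) ∘ Prod.map id (fun x => -x) := by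
    ext; simp [sub_eq_add_neg]
  rw [hsub, ← Measure.map_map (by fun_prop) (by fun_prop),
    ← Measure.map_prod_map _ _ measurable_id measurable_neg, Measure.map_id, gaussianReal_map_neg,
    ← Measure.conv, gaussianReal_conv_gaussianReal, sub_eq_add_neg]

lemma map_eval_sub_stdGaussian_prod (d : ℕ) (j : Fin d) :
    ((stdGaussian d).prod (stdGaussian d)).map (fun p => p.1 j - p.2 j) = gaussianReal 0 2 := by
  have hcomp : (fun p : (Fin d → ℝ) × (Fin d → ℝ) => p.1 j - p.2 j)
      = (fun q : ℝ × ℝ => q.1 - q.2) ∘ Prod.map (Function.eval j) (Function.eval j) := rfl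
  rw [hcomp, ← Measure.map_map (by fun_prop) (by fun_prop),
    ← Measure.map_prod_map _ _ (measurable_pi_apply j) (measurable_pi_apply j), _root_.stdGaussian,
    (measurePreserving_eval _ j).map_eq, map_sub_prod_gaussianReal, sub_zero, one_add_one_eq_two]

lemma integral_abs_eval_sub_rpow_stdGaussian_prod (d : ℕ) (j : Fin d) {η : ℝ} (hη : -1 < η) :
    ∫ p, |p.1 j - p.2 j| ^ η ∂((stdGaussian d).prod (stdGaussian d)) = 2 ^ (η / 2) * Mmom η := by
  rw [← integral_map (f := fun w => |w| ^ η) (by fun_prop)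
    (measurable_abs.pow_const η).aestronglyMeasurable, map_eval_sub_stdGaussian_prod,
    integral_abs_rpow_gaussianReal_zero_mean hη]
  norm_num

lemma integrable_abs_eval_sub_rpow_stdGaussian_prod (d : ℕ) (j : Fin d) {η : ℝ} (hη : 0 < η) :
    Integrable (fun p : (Fin d → ℝ) × (Fin d → ℝ) => |p.1 j - p.2 j| ^ η)
      ((stdGaussian d).prod (stdGaussian d)) := by
  have h := integrable_abs_rpow_gaussianReal hη 0 2
  rw [← map_eval_sub_stdGaussian_prod d j] at h
  exact h.comp_measurable (by fun_prop)

lemma sobolTau_le_of_abs_sub_update_le {d : ℕ} {f : (Fin d → ℝ) → ℝ} {j : Fin d} {L α : ℝ}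
    (hα : 0 < α) (hf : ∀ x z, |f x - f (Function.update x j z)| ≤ L * |x j - z| ^ α) :
    sobolTau d f j ≤ 2 ^ (α - 1) * L ^ 2 * Mmom (2 * α) := by
  have hsq : ∀ p : (Fin d → ℝ) × (Fin d → ℝ),
      (f p.1 - f (Function.update p.1 j (p.2 j))) ^ 2 ≤ L ^ 2 * |p.1 j - p.2 j| ^ (2 * α) := by
    intro p
    calc (f p.1 - f (Function.update p.1 j (p.2 j))) ^ 2
        ≤ (L * |p.1 j - p.2 j| ^ α) ^ 2 := sq_le_sq' (abs_le.mp (hf _ _)).1 (abs_le.mp (hf _ _)).2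
      _ = L ^ 2 * |p.1 j - p.2 j| ^ (2 * α) := by
        rw [mul_pow, ← Real.rpow_mul_natCast (abs_nonneg _), mul_comm α]
        norm_num
  have hint := integral_mono_of_nonneg (ae_of_all _ fun p => sq_nonneg _)
    ((integrable_abs_eval_sub_rpow_stdGaussian_prod d j (by positivity)).const_mul (L ^ 2))
    (ae_of_all _ hsq)
  rw [integral_const_mul, integral_abs_eval_sub_rpow_stdGaussian_prod d j (by linarith),
    mul_div_cancel_left₀ α two_ne_zero] at hint
  rw [sobolTau, Real.rpow_sub_one two_ne_zero]
  linarith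

lemma sum_mul_update_sub {ι : Type*} [Fintype ι] [DecidableEq ι] (θ x : ι → ℝ) (j : ι) (z : ℝ) :
    ∑ i, θ i * x i - ∑ i, θ i * Function.update x j z i = θ j * (x j - z) := by
  rw [← Finset.sum_sub_distrib, Finset.sum_eq_single j]
  · simp [mul_sub]
  · intro i _ hij
    simp [hij]
  · simp

lemma abs_ridge_sub_update_le {d : ℕ} {g : ℝ → ℝ} {C α : ℝ}
    (hg : ∀ y y' : ℝ, |g y - g y'| ≤ C * |y - y'| ^ α) (θ x : Fin d → ℝ) (j : Fin d) (z : ℝ) :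
    |g (∑ i, θ i * x i) - g (∑ i, θ i * Function.update x j z i)|
      ≤ C * |θ j| ^ α * |x j - z| ^ α := by
  have h := hg (∑ i, θ i * x i) (∑ i, θ i * Function.update x j z i)
  rwa [sum_mul_update_sub, abs_mul, Real.mul_rpow (abs_nonneg _) (abs_nonneg _), ← mul_assoc] at h

lemma sum_abs_rpow_two_mul_le {ι : Type*} [Fintype ι] (θ : ι → ℝ) {α : ℝ} (hα0 : 0 < α)
    (hα1 : α ≤ 1) :
    ∑ i, |θ i| ^ (2 * α) ≤ (Fintype.card ι : ℝ) ^ (1 - α) * (∑ i, θ i ^ 2) ^ α := by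
  have h := Real.inner_le_weight_mul_Lp_of_nonneg Finset.univ (one_le_inv₀ hα0 |>.mpr hα1)
    (fun _ => 1) (fun i => |θ i| ^ (2 * α)) (fun _ => zero_le_one) (fun _ => by positivity)
  have hpow : ∀ i, (|θ i| ^ (2 * α)) ^ α⁻¹ = θ i ^ 2 := fun i => by
    rw [← Real.rpow_mul (abs_nonneg _), mul_assoc, mul_inv_cancel₀ hα0.ne', mul_one,
      Real.rpow_two, sq_abs]
  simpa only [one_mul, inv_inv, hpow, Finset.sum_const, Finset.card_univ, nsmul_eq_mul,
    mul_one] using h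

lemma sum_sobolTau_ridge_le {d : ℕ} {g : ℝ → ℝ} {C α : ℝ} (hα0 : 0 < α) (hα1 : α ≤ 1)
    (hg : ∀ y y' : ℝ, |g y - g y'| ≤ C * |y - y'| ^ α) (θ : Fin d → ℝ) :
    ∑ j, sobolTau d (fun x => g (∑ i, θ i * x i)) j
      ≤ 2 ^ (α - 1) * C ^ 2 * Mmom (2 * α) * ((d : ℝ) ^ (1 - α) * (∑ j, θ j ^ 2) ^ α) :=
  calc ∑ j, sobolTau d (fun x => g (∑ i, θ i * x i)) j
      ≤ ∑ j, 2 ^ (α - 1) * (C * |θ j| ^ α) ^ 2 * Mmom (2 * α) :=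
        Finset.sum_le_sum fun j _ =>
          sobolTau_le_of_abs_sub_update_le hα0 (abs_ridge_sub_update_le hg θ · j)
    _ = 2 ^ (α - 1) * C ^ 2 * Mmom (2 * α) * ∑ j, |θ j| ^ (2 * α) := by
        rw [Finset.mul_sum]
        congr 1 with j
        rw [mul_pow, ← Real.rpow_mul_natCast (abs_nonneg _), mul_comm α]
        norm_num
        ring
    _ ≤ 2 ^ (α - 1) * C ^ 2 * Mmom (2 * α) * ((d : ℝ) ^ (1 - α) * (∑ j, θ j ^ 2) ^ α) := by
        have hM : 0 ≤ Mmom (2 * α) := Mmom_nonneg (by linarith)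
        gcongr
        simpa using sum_abs_rpow_two_mul_le θ hα0 hα1

theorem stmt2_general (d : ℕ)
    (θ : Fin d → ℝ) (hθ : ∑ j, θ j ^ 2 = 1)
    (g : ℝ → ℝ) (C α : ℝ) (hα0 : 0 < α) (hα1 : α < 1)
    (hg : ∀ y y' : ℝ, |g y - g y'| ≤ C * |y - y'| ^ α)
    (f : (Fin d → ℝ) → ℝ) (hf : ∀ x, f x = g (∑ j, θ j * x j)) :
    meanDim d f ≤ (C / Real.sqrt (variance f (stdGaussian d))) ^ 2
      * 2 ^ (α - 1) * Mmom (2 * α) * (d : ℝ) ^ (1 - α) := by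
  obtain rfl : f = fun x => g (∑ j, θ j * x j) := funext hf
  have hσ2 := variance_nonneg (fun x => g (∑ j, θ j * x j)) (stdGaussian d)
  have hsum := sum_sobolTau_ridge_le hα0 hα1.le hg θ
  rw [hθ, Real.one_rpow, mul_one] at hsum
  rw [meanDim, div_pow, Real.sq_sqrt hσ2]
  calc _ ≤ 2 ^ (α - 1) * C ^ 2 * Mmom (2 * α) * (d : ℝ) ^ (1 - α) / _ := by gcongr
    _ = _ := by ring

/-- Corollary 3.3 (Hölder ridge functions, `r = 1`):
`ν(f) ≤ (C/σ)² 2^{α−1} M_{2α} d^{1−α}`. -/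
theorem stmt2 (d : ℕ) (hd : 1 ≤ d)
    (θ : Fin d → ℝ) (hθ : ∑ j, θ j ^ 2 = 1)
    (g : ℝ → ℝ) (C α : ℝ) (hα0 : 0 < α) (hα1 : α < 1)
    (hg : ∀ y y' : ℝ, |g y - g y'| ≤ C * |y - y'| ^ α)
    (f : (Fin d → ℝ) → ℝ) (hf : ∀ x, f x = g (∑ j, θ j * x j))
    (hσ : 0 < variance f (stdGaussian d)) :
    meanDim d f ≤ (C / Real.sqrt (variance f (stdGaussian d))) ^ 2
      * 2 ^ (α - 1) * Mmom (2 * α) * (d : ℝ) ^ (1 - α) :=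
  stmt2_general d θ hθ g C α hα0 hα1 hg f hf

end
end

section
/- Let (x, y) be a bivariate Gaussian random vector with mean (0, 0), unit variances, and correlation ρ ≥ 0, and let t ≥ 0. Then Pr(x > t, y < t) ≥ (1/(2π)) · ((1−ρ)/(1+ρ))^{1/2} · exp(−t²/(1+ρ) − 1). -/
open MeasureTheory Real

open Set Filter

/-!
The quadrant `{t < x, y < t}` contains the triangle `t < x < 2t - y`. On the fibre of the
triangle over `y < t`, an interval of length `t - y`, the quadratic form in the exponent is
largest at the endpoint `x = 2t - y`, where it equals `2(1 - ρ)t² + 2(1 + ρ)(t - y)²`. So the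
density there is at least `exp(-t²/(1 + ρ)) exp(-(t - y)²/(1 - ρ)) / (2π √(1 - ρ²))`, and
integrating `(t - y) exp(-(t - y)²/(1 - ρ))` over `y < t` gives `(1 - ρ)/2`. The triangle thus
carries mass at least `√((1 - ρ)/(1 + ρ)) exp(-t²/(1 + ρ)) / (4π)`, which beats the claim
since `e > 2`.
-/

noncomputable def bivariateNormalPDF (ρ : ℝ) (p : ℝ × ℝ) : ℝ :=
  1 / (2 * π * √(1 - ρ ^ 2)) * exp (-(p.1 ^ 2 - 2 * ρ * p.1 * p.2 + p.2 ^ 2) / (2 * (1 - ρ ^ 2)))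

theorem bivariateNormalPDF_nonneg (ρ : ℝ) (p : ℝ × ℝ) : 0 ≤ bivariateNormalPDF ρ p := by
  unfold bivariateNormalPDF
  positivity

theorem continuous_bivariateNormalPDF (ρ : ℝ) : Continuous (bivariateNormalPDF ρ) := by
  unfold bivariateNormalPDF
  fun_prop

theorem one_sub_abs_mul_le_quadForm (ρ x y : ℝ) :
    (1 - |ρ|) * (x ^ 2 + y ^ 2) ≤ x ^ 2 - 2 * ρ * x * y + y ^ 2 := by
  rcases abs_cases ρ with ⟨h, hρ⟩ | ⟨h, hρ⟩ <;> rw [h]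
  · nlinarith [mul_nonneg hρ (sq_nonneg (x - y))]
  · nlinarith [mul_nonneg (neg_nonneg.2 hρ.le) (sq_nonneg (x + y))]

theorem integrable_bivariateNormalPDF {ρ : ℝ} (hρ : |ρ| < 1) :
    Integrable (bivariateNormalPDF ρ) := by
  have hρ2 : 0 < 1 - ρ ^ 2 := by
    rw [← sq_abs]; nlinarith [abs_nonneg ρ]
  set c := (2 * (1 + |ρ|))⁻¹
  have hc : 0 < c := by positivity
  have hbound : Integrable fun p : ℝ × ℝ =>
      1 / (2 * π * √(1 - ρ ^ 2)) * (exp (-c * p.1 ^ 2) * exp (-c * p.2 ^ 2)) :=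
    ((integrable_exp_neg_mul_sq hc).mul_prod (integrable_exp_neg_mul_sq hc)).const_mul _
  refine hbound.mono' (continuous_bivariateNormalPDF ρ).aestronglyMeasurable
    (Eventually.of_forall fun p => ?_)
  rw [norm_of_nonneg (bivariateNormalPDF_nonneg ρ p), bivariateNormalPDF, ← exp_add]
  gcongr
  have hc' : c * (2 * (1 - ρ ^ 2)) = 1 - |ρ| := by
    rw [← sq_abs ρ, inv_mul_eq_div, div_eq_iff (by positivity)]
    ring
  rw [div_le_iff₀ (by positivity), show (-c * p.1 ^ 2 + -c * p.2 ^ 2) * (2 * (1 - ρ ^ 2))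
    = -((1 - |ρ|) * (p.1 ^ 2 + p.2 ^ 2)) by rw [← hc']; ring]
  linarith [one_sub_abs_mul_le_quadForm ρ p.1 p.2]

theorem integral_Ioi_mul_exp_neg_mul_sq {b : ℝ} (hb : 0 < b) :
    ∫ r in Ioi 0, r * exp (-b * r ^ 2) = (2 * b)⁻¹ := by
  have h := integral_mul_cexp_neg_mul_sq (b := (b : ℂ)) (by simpa using hb)
  apply Complex.ofReal_injective
  rw [← integral_complex_ofReal]
  push_cast
  exact h

theorem integral_Iio_sub_mul_exp_neg_mul_sq {b : ℝ} (hb : 0 < b) (t : ℝ) :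
    ∫ y in Iio t, (t - y) * exp (-b * (t - y) ^ 2) = (2 * b)⁻¹ := by
  have h := (Measure.measurePreserving_sub_left volume t).setIntegral_preimage_emb
    (Homeomorph.subLeft t).measurableEmbedding (fun r => r * exp (-b * r ^ 2)) (Ioi 0)
  rw [← integral_Ioi_mul_exp_neg_mul_sq hb, ← h]
  congr 2
  ext y
  simp

theorem quadForm_le_of_mem_triangle {ρ t x y : ℝ} (hρ0 : 0 ≤ ρ) (hρ1 : ρ ≤ 1) (ht : 0 ≤ t)
    (hx : t ≤ x) (hxy : x ≤ 2 * t - y) :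
    x ^ 2 - 2 * ρ * x * y + y ^ 2 ≤ 2 * (1 - ρ) * t ^ 2 + 2 * (1 + ρ) * (t - y) ^ 2 := by
  -- the difference factors as `(2t - y - x) (2(1 - ρ)t + (x - y) + 2ρ(t - y))`
  have hρty : 0 ≤ ρ * (t - y) := mul_nonneg hρ0 (by linarith)
  have hρt : 0 ≤ (1 - ρ) * t := mul_nonneg (by linarith) ht
  nlinarith [mul_nonneg (by linarith : 0 ≤ 2 * t - y - x)
    (by linarith : 0 ≤ 2 * (1 - ρ) * t + (x - y) + 2 * (ρ * (t - y)))]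

theorem bivariateNormalPDF_ge_of_mem_triangle {ρ t x y : ℝ} (hρ0 : 0 ≤ ρ) (hρ1 : ρ < 1)
    (ht : 0 ≤ t) (hx : t ≤ x) (hxy : x ≤ 2 * t - y) :
    1 / (2 * π * √(1 - ρ ^ 2)) * exp (-t ^ 2 / (1 + ρ)) * exp (-(1 - ρ)⁻¹ * (t - y) ^ 2)
      ≤ bivariateNormalPDF ρ (x, y) := by
  have h1m : 0 < 1 - ρ := by linarith
  have h1p : 0 < 1 + ρ := by linarith
  rw [mul_assoc, ← exp_add, bivariateNormalPDF]
  gcongr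
  rw [le_div_iff₀ (by nlinarith),
    show (-t ^ 2 / (1 + ρ) + -(1 - ρ)⁻¹ * (t - y) ^ 2) * (2 * (1 - ρ ^ 2))
      = -(2 * (1 - ρ) * t ^ 2 + 2 * (1 + ρ) * (t - y) ^ 2) by field_simp; ring]
  linarith [quadForm_le_of_mem_triangle hρ0 hρ1.le ht hx hxy]

theorem le_integral_Ioo_bivariateNormalPDF {ρ t y : ℝ} (hρ0 : 0 ≤ ρ) (hρ1 : ρ < 1) (ht : 0 ≤ t)
    (hy : y < t) :
    1 / (2 * π * √(1 - ρ ^ 2)) * exp (-t ^ 2 / (1 + ρ))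
        * ((t - y) * exp (-(1 - ρ)⁻¹ * (t - y) ^ 2))
      ≤ ∫ x in Ioo t (2 * t - y), bivariateNormalPDF ρ (x, y) := by
  have hint : IntegrableOn (fun x => bivariateNormalPDF ρ (x, y)) (Ioo t (2 * t - y)) :=
    ((continuous_bivariateNormalPDF ρ).comp (.prodMk_left y)).integrableOn_Icc.mono_set
      Ioo_subset_Icc_self
  have h := setIntegral_ge_of_const_le_real measurableSet_Ioo (by simp)
    (fun x hx => bivariateNormalPDF_ge_of_mem_triangle hρ0 hρ1 ht hx.1.le hx.2.le) hint
  rw [volume_real_Ioo_of_le (by linarith)] at h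
  linarith

theorem le_setIntegral_bivariateNormalPDF_triangle {ρ t : ℝ} (hρ0 : 0 ≤ ρ) (hρ1 : ρ < 1)
    (ht : 0 ≤ t) :
    1 / (2 * π * √(1 - ρ ^ 2)) * exp (-t ^ 2 / (1 + ρ)) * ((1 - ρ) / 2)
      ≤ ∫ p in {p : ℝ × ℝ | t < p.1 ∧ p.1 < 2 * t - p.2}, bivariateNormalPDF ρ p := by
  set S := {p : ℝ × ℝ | t < p.1 ∧ p.1 < 2 * t - p.2}
  have hS : MeasurableSet S :=
    (measurableSet_lt measurable_const measurable_fst).inter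
      (measurableSet_lt measurable_fst (measurable_const.sub measurable_snd))
  have hint :
      Integrable (S.indicator (bivariateNormalPDF ρ)) ((volume : Measure ℝ).prod volume) :=
    (integrable_bivariateNormalPDF (abs_lt.2 ⟨by linarith, hρ1⟩)).indicator hS
  have fiber (y : ℝ) : ∫ x, S.indicator (bivariateNormalPDF ρ) (x, y)
      = ∫ x in Ioo t (2 * t - y), bivariateNormalPDF ρ (x, y) := by
    rw [← integral_indicator measurableSet_Ioo]
    rfl
  have h1m : 0 < 1 - ρ := by linarith
  calc 1 / (2 * π * √(1 - ρ ^ 2)) * exp (-t ^ 2 / (1 + ρ)) * ((1 - ρ) / 2)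
      = ∫ y in Iio t, 1 / (2 * π * √(1 - ρ ^ 2)) * exp (-t ^ 2 / (1 + ρ))
          * ((t - y) * exp (-(1 - ρ)⁻¹ * (t - y) ^ 2)) := by
        rw [integral_const_mul, integral_Iio_sub_mul_exp_neg_mul_sq (inv_pos.2 h1m)]
        field_simp
    _ ≤ ∫ y in Iio t, ∫ x, S.indicator (bivariateNormalPDF ρ) (x, y) := by
        refine setIntegral_mono_on ?_ hint.integral_prod_right.integrableOn measurableSet_Iio
          fun y hy => (fiber y).symm ▸ le_integral_Ioo_bivariateNormalPDF hρ0 hρ1 ht hy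
        exact ((integrable_mul_exp_neg_mul_sq (inv_pos.2 h1m)).comp_sub_left t).integrableOn
          |>.const_mul _
    _ ≤ ∫ y, ∫ x, S.indicator (bivariateNormalPDF ρ) (x, y) :=
        setIntegral_le_integral hint.integral_prod_right (Eventually.of_forall fun y =>
          integral_nonneg fun x => indicator_nonneg (fun p _ => bivariateNormalPDF_nonneg ρ p) _)
    _ = ∫ p in S, bivariateNormalPDF ρ p := by
        rw [← integral_indicator hS]
        exact (integral_prod_symm _ hint).symm

theorem one_sub_div_sqrt_one_sub_sq {ρ : ℝ} (hρ0 : -1 ≤ ρ) (hρ1 : ρ ≤ 1) :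
    (1 - ρ) / √(1 - ρ ^ 2) = √((1 - ρ) / (1 + ρ)) := by
  rw [show 1 - ρ ^ 2 = (1 - ρ) * (1 + ρ) by ring, sqrt_mul (by linarith), ← div_div,
    div_sqrt, sqrt_div' _ (by linarith)]

/-- Lemma 4.3: lower bound for a bivariate Gaussian probability.
The probability `Pr(x > t, y < t)` for a centered bivariate Gaussian with unit
variances and correlation `0 ≤ ρ < 1` is written as the integral of the joint
density over the region `{(x, y) | x > t, y < t}`. -/
theorem stmt7 (ρ t : ℝ) (hρ0 : 0 ≤ ρ) (hρ1 : ρ < 1) (ht : 0 ≤ t) :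
    (1 / (2 * π)) * Real.sqrt ((1 - ρ) / (1 + ρ))
        * Real.exp (-t ^ 2 / (1 + ρ) - 1)
      ≤ ∫ p : ℝ × ℝ in {p : ℝ × ℝ | t < p.1 ∧ p.2 < t},
          (1 / (2 * π * Real.sqrt (1 - ρ ^ 2))) *
            Real.exp (-(p.1 ^ 2 - 2 * ρ * p.1 * p.2 + p.2 ^ 2)
              / (2 * (1 - ρ ^ 2))) := by
  have hsub : {p : ℝ × ℝ | t < p.1 ∧ p.1 < 2 * t - p.2} ⊆ {p | t < p.1 ∧ p.2 < t} :=
    fun p ⟨h1, h2⟩ => ⟨h1, by linarith⟩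
  calc 1 / (2 * π) * √((1 - ρ) / (1 + ρ)) * exp (-t ^ 2 / (1 + ρ) - 1)
      = 1 / (2 * π * √(1 - ρ ^ 2)) * exp (-t ^ 2 / (1 + ρ)) * (1 - ρ) * (exp 1)⁻¹ := by
        rw [← one_sub_div_sqrt_one_sub_sq (by linarith) hρ1.le, exp_sub]
        ring
    _ ≤ 1 / (2 * π * √(1 - ρ ^ 2)) * exp (-t ^ 2 / (1 + ρ)) * (1 - ρ) * 2⁻¹ := by
        gcongr
        exact exp_one_gt_two.le
    _ ≤ ∫ p in {p : ℝ × ℝ | t < p.1 ∧ p.1 < 2 * t - p.2}, bivariateNormalPDF ρ p := by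
        convert le_setIntegral_bivariateNormalPDF_triangle hρ0 hρ1 ht using 1
        ring
    _ ≤ ∫ p in {p : ℝ × ℝ | t < p.1 ∧ p.2 < t}, bivariateNormalPDF ρ p :=
        setIntegral_mono_set
          (integrable_bivariateNormalPDF (abs_lt.2 ⟨by linarith, hρ1⟩)).integrableOn
          (Eventually.of_forall (bivariateNormalPDF_nonneg ρ)) hsub.eventuallyLE
end
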